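/- arXiv:2603.08527 — 3 statements merged into one kernel-verified Lean document; each statement's English description precedes it below -/
import Mathlib

section
/- Let p be a prime and let ξ be a p-adic integer (more generally, an element of a finite extension of Q_p) with |ξ|_p = 1 such that ξ is not a root of unity. Then there exists a constant C > 0, independent of n, such that for every natural number n ≥ 1, we have 1/n ≤ C · |ξ^n − 1|_p. -/
section aux

variable {p : ℕ} [hp : Fact p.Prime]

lemma aux_pow_sub_one_le (z : ℤ_[p]) (k : ℕ) : ‖(1 + z) ^ k - 1‖ ≤ ‖z‖ := by
  have h : (1 + z) ^ k - 1 = (∑ i ∈ Finset.range k, (1 + z) ^ i) * z := by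
    have := geom_sum_mul (1 + z) k
    simpa using this.symm
  rw [h, norm_mul]
  calc ‖∑ i ∈ Finset.range k, (1 + z) ^ i‖ * ‖z‖ ≤ 1 * ‖z‖ := by
        gcongr; exact PadicInt.norm_le_one _
    _ = ‖z‖ := one_mul _

lemma aux_exists_w (z : ℤ_[p]) (n : ℕ) : ∃ w : ℤ_[p], (1 + z) ^ n = 1 + n * z + z ^ 2 * w := by
  induction n with
  | zero => exact ⟨0, by ring⟩
  | succ n ih =>
    obtain ⟨w, hw⟩ := ih
    refine ⟨w + n + z * w, ?_⟩
    rw [pow_succ, hw]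
    push_cast
    ring

lemma aux_pinv_le_one : ((p : ℝ))⁻¹ ≤ 1 := by
  rw [inv_le_one_iff₀]; right; exact_mod_cast hp.out.one_lt.le

lemma aux_pow_p (z : ℤ_[p]) (hz : ‖z‖ < (p : ℝ)⁻¹) :
    ‖(1 + z) ^ p - 1‖ = (p : ℝ)⁻¹ * ‖z‖ := by
  rcases eq_or_ne z 0 with rfl | hz0
  · simp
  obtain ⟨w, hw⟩ := aux_exists_w z p
  have hzpos : (0:ℝ) < ‖z‖ := norm_pos_iff.mpr hz0
  have key : ‖z ^ 2 * w‖ < ‖(p : ℤ_[p]) * z‖ := by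
    rw [norm_mul, norm_mul, PadicInt.norm_p, pow_two, norm_mul]
    calc ‖z‖ * ‖z‖ * ‖w‖ ≤ ‖z‖ * ‖z‖ * 1 := by
          gcongr; exact PadicInt.norm_le_one _
      _ = ‖z‖ * ‖z‖ := mul_one _
      _ < (p:ℝ)⁻¹ * ‖z‖ := by gcongr
  have heq : (1 + z) ^ p - 1 = (p : ℤ_[p]) * z + z ^ 2 * w := by rw [hw]; push_cast; ring
  rw [heq, PadicInt.norm_add_eq_max_of_ne key.ne', max_eq_left key.le,
    norm_mul, PadicInt.norm_p]

lemma aux_norm_nat_eq_one {k : ℕ} (hk : ¬ p ∣ k) : ‖(k : ℤ_[p])‖ = 1 := by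
  refine le_antisymm (PadicInt.norm_le_one _) ?_
  by_contra h
  push_neg at h
  have : ‖((k : ℤ) : ℤ_[p])‖ < 1 := by push_cast; exact h
  rw [PadicInt.norm_int_lt_one_iff_dvd] at this
  exact hk (Int.ofNat_dvd.mp this)

lemma aux_main (k : ℕ) : ∀ z : ℤ_[p], ‖z‖ < (p : ℝ)⁻¹ →
    ‖(1 + z) ^ k - 1‖ = ‖(k : ℤ_[p])‖ * ‖z‖ := by
  induction k using Nat.strong_induction_on with
  | _ k ih =>
    intro z hz
    rcases Nat.eq_zero_or_pos k with rfl | hk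
    · simp
    by_cases hdvd : p ∣ k
    · obtain ⟨k', rfl⟩ := hdvd
      have hk0 : 0 < k' := by
        rcases Nat.eq_zero_or_pos k' with rfl | h
        · simp at hk
        · exact h
      have hk' : k' < p * k' :=
        (Nat.lt_mul_iff_one_lt_left hk0).mpr hp.out.one_lt
      set z₂ := (1 + z) ^ p - 1 with hz₂def
      have hz₂ : ‖z₂‖ = (p:ℝ)⁻¹ * ‖z‖ := aux_pow_p z hz
      have hppos : (0:ℝ) < (p:ℝ)⁻¹ := by
        have : (0:ℝ) < p := by exact_mod_cast hp.out.pos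
        positivity
      have hz₂lt : ‖z₂‖ < (p:ℝ)⁻¹ := by
        rw [hz₂]
        calc (p:ℝ)⁻¹ * ‖z‖ < (p:ℝ)⁻¹ * 1 := by
              apply mul_lt_mul_of_pos_left _ hppos
              exact lt_of_lt_of_le hz aux_pinv_le_one
          _ = (p:ℝ)⁻¹ := mul_one _
      have h1z : (1 : ℤ_[p]) + z₂ = (1 + z) ^ p := by rw [hz₂def]; ring
      have hpow : (1 + z) ^ (p * k') = (1 + z₂) ^ k' := by
        rw [h1z, ← pow_mul]
      have := ih k' hk' z₂ hz₂lt
      rw [hpow, this, hz₂]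
      have hcast : ((p * k' : ℕ) : ℤ_[p]) = (p : ℤ_[p]) * (k' : ℤ_[p]) := by push_cast; ring
      rw [hcast, norm_mul, PadicInt.norm_p]
      ring
    · have hknorm : ‖(k : ℤ_[p])‖ = 1 := aux_norm_nat_eq_one hdvd
      set S := ∑ i ∈ Finset.range k, (1 + z) ^ i with hS
      have hfac : (1 + z) ^ k - 1 = S * z := by
        have := geom_sum_mul (1 + z) k
        simpa using this.symm
      have hT : ∃ T : ℤ_[p], S = (k : ℤ_[p]) + T * z := by
        refine ⟨∑ i ∈ Finset.range k, ∑ j ∈ Finset.range i, (1 + z) ^ j, ?_⟩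
        rw [hS, Finset.sum_mul]
        have hterm : ∀ i ∈ Finset.range k, (1 + z) ^ i =
            1 + (∑ j ∈ Finset.range i, (1 + z) ^ j) * z := by
          intro i _
          have := geom_sum_mul (1 + z) i
          simp only [add_sub_cancel_left] at this
          rw [this]; ring
        rw [Finset.sum_congr rfl hterm, Finset.sum_add_distrib]
        simp [add_comm]
      obtain ⟨T, hTeq⟩ := hT
      have hTz : ‖T * z‖ < 1 := by
        rw [norm_mul]
        calc ‖T‖ * ‖z‖ ≤ 1 * ‖z‖ := by gcongr; exact PadicInt.norm_le_one _
          _ = ‖z‖ := one_mul _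
          _ < (p:ℝ)⁻¹ := hz
          _ ≤ 1 := aux_pinv_le_one
      have hSnorm : ‖S‖ = 1 := by
        rw [hTeq, PadicInt.norm_add_eq_max_of_ne]
        · rw [hknorm, max_eq_left (hknorm ▸ hTz.le)]
        · rw [hknorm]; exact hTz.ne'
      rw [hfac, norm_mul, hSnorm, hknorm, one_mul]

lemma aux_norm_nat_ge (k : ℕ) (hk : 1 ≤ k) : (1 : ℝ) / k ≤ ‖(k : ℤ_[p])‖ := by
  induction k using Nat.strong_induction_on with
  | _ k ih =>
    by_cases hdvd : p ∣ k
    · obtain ⟨k', rfl⟩ := hdvd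
      have hk' : 1 ≤ k' := by
        rcases Nat.eq_zero_or_pos k' with rfl | h
        · simp at hk
        · exact h
      have hlt : k' < p * k' := (Nat.lt_mul_iff_one_lt_left hk').mpr hp.out.one_lt
      have hih := ih k' hlt hk'
      have hcast : ((p * k' : ℕ) : ℤ_[p]) = (p : ℤ_[p]) * (k' : ℤ_[p]) := by push_cast; ring
      rw [hcast, norm_mul, PadicInt.norm_p, Nat.cast_mul]
      have hppos : (0:ℝ) < p := by exact_mod_cast hp.out.pos
      have hk'pos : (0:ℝ) < k' := by exact_mod_cast hk'
      calc (1:ℝ) / ((p:ℝ) * (k':ℝ)) = (p:ℝ)⁻¹ * (1 / (k':ℝ)) := by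
            field_simp
        _ ≤ (p:ℝ)⁻¹ * ‖((k' : ℕ) : ℤ_[p])‖ := by gcongr
    · rw [aux_norm_nat_eq_one hdvd]
      have h1 : (1:ℝ) ≤ k := by exact_mod_cast hk
      rw [div_le_one (by linarith)]; exact h1

end aux

theorem padic_log_bound (p : ℕ) [Fact p.Prime] (ξ : ℤ_[p])
    (hnorm : ‖ξ‖ = 1) (hroot : ∀ n : ℕ, 1 ≤ n → ξ ^ n ≠ 1) :
    ∃ C : ℝ, 0 < C ∧ ∀ n : ℕ, 1 ≤ n → (1 : ℝ) / n ≤ C * ‖ξ ^ n - 1‖ := by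
  have hp := (Fact.out : p.Prime)
  have hp1 : 1 < p := hp.one_lt
  have hferm : ∃ m : ℕ, 1 ≤ m ∧ ‖ξ ^ m - 1‖ < 1 := by
    refine ⟨p - 1, by omega, ?_⟩
    have hne : PadicInt.toZMod ξ ≠ 0 := by
      intro h
      have hmem : ξ ∈ RingHom.ker (PadicInt.toZMod (p := p)) := h
      rw [PadicInt.ker_toZMod, PadicInt.maximalIdeal_eq_span_p,
        Ideal.mem_span_singleton] at hmem
      have : ‖ξ‖ < 1 := (PadicInt.norm_lt_one_iff_dvd ξ).mpr hmem
      rw [hnorm] at this; exact absurd this (lt_irrefl 1)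
    have hker : ξ ^ (p - 1) - 1 ∈ RingHom.ker (PadicInt.toZMod (p := p)) := by
      rw [RingHom.mem_ker, map_sub, map_pow, map_one, sub_eq_zero]
      exact ZMod.pow_card_sub_one_eq_one hne
    rw [PadicInt.ker_toZMod, PadicInt.maximalIdeal_eq_span_p,
      Ideal.mem_span_singleton] at hker
    exact (PadicInt.norm_lt_one_iff_dvd _).mpr hker
  classical
  set d := Nat.find hferm with hd
  obtain ⟨hd1, hdlt⟩ : 1 ≤ d ∧ ‖ξ ^ d - 1‖ < 1 := Nat.find_spec hferm
  have hdvd : ∀ n : ℕ, ‖ξ ^ n - 1‖ < 1 → d ∣ n := by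
    intro n hn
    have hr : n % d < d := Nat.mod_lt _ (by omega)
    rcases Nat.eq_zero_or_pos (n % d) with h0 | hpos
    · exact Nat.dvd_of_mod_eq_zero h0
    exfalso
    have hqd : ‖ξ ^ (d * (n / d)) - 1‖ < 1 := by
      rw [pow_mul]
      have h1 : ξ ^ d = 1 + (ξ ^ d - 1) := by ring
      rw [h1]
      exact lt_of_le_of_lt (aux_pow_sub_one_le _ _) hdlt
    have hsplit : ξ ^ (n % d) - 1 =
        (ξ ^ n - 1) + (-(ξ ^ (n % d) * (ξ ^ (d * (n / d)) - 1))) := by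
      have h2 : ξ ^ n = ξ ^ (n % d) * ξ ^ (d * (n / d)) := by
        rw [← pow_add]
        congr 1
        exact (Nat.mod_add_div n d).symm
      rw [h2]; ring
    have hsm : ‖ξ ^ (n % d) - 1‖ < 1 := by
      rw [hsplit]
      apply lt_of_le_of_lt (PadicInt.nonarchimedean _ _)
      apply max_lt hn
      rw [norm_neg, norm_mul]
      calc ‖ξ ^ (n % d)‖ * ‖ξ ^ (d * (n/d)) - 1‖ ≤ 1 * ‖ξ ^ (d * (n/d)) - 1‖ := by
            gcongr; exact PadicInt.norm_le_one _
        _ = _ := one_mul _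
        _ < 1 := hqd
    exact Nat.find_min hferm hr ⟨hpos, hsm⟩
  set z : ℤ_[p] := ξ ^ (p * d) - 1 with hzdef
  have hz0 : z ≠ 0 := sub_ne_zero.mpr (hroot (p * d) (Nat.one_le_iff_ne_zero.mpr (Nat.mul_ne_zero (by omega) (by omega))))
  have hzpos : (0:ℝ) < ‖z‖ := norm_pos_iff.mpr hz0
  have hppos : (0:ℝ) < (p:ℝ)⁻¹ := by
    have : (0:ℝ) < p := by exact_mod_cast hp.pos
    positivity
  have hzsmall : ‖z‖ < (p : ℝ)⁻¹ := by
    have hzd : ‖ξ ^ d - 1‖ ≤ (p:ℝ)⁻¹ := by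
      rw [PadicInt.norm_lt_one_iff_dvd] at hdlt
      obtain ⟨c, hc⟩ := hdlt
      rw [hc, norm_mul, PadicInt.norm_p]
      calc (p:ℝ)⁻¹ * ‖c‖ ≤ (p:ℝ)⁻¹ * 1 := by
            gcongr; exact PadicInt.norm_le_one _
        _ = (p:ℝ)⁻¹ := mul_one _
    obtain ⟨w, hw⟩ := aux_exists_w (ξ ^ d - 1) p
    have heq : z = (p : ℤ_[p]) * (ξ ^ d - 1) + (ξ ^ d - 1) ^ 2 * w := by
      rw [hzdef, mul_comm p d, pow_mul]
      have h3 : ξ ^ d = 1 + (ξ ^ d - 1) := by ring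
      rw [h3, hw]; push_cast; ring
    have h1 : ‖(p : ℤ_[p]) * (ξ ^ d - 1)‖ ≤ (p:ℝ)⁻¹ * (p:ℝ)⁻¹ := by
      rw [norm_mul, PadicInt.norm_p]; gcongr
    have h2 : ‖(ξ ^ d - 1) ^ 2 * w‖ ≤ (p:ℝ)⁻¹ * (p:ℝ)⁻¹ := by
      rw [norm_mul, pow_two, norm_mul]
      calc ‖ξ^d - 1‖ * ‖ξ^d - 1‖ * ‖w‖ ≤ (p:ℝ)⁻¹ * (p:ℝ)⁻¹ * 1 := by
            gcongr <;> first | exact hzd | exact PadicInt.norm_le_one _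
        _ = _ := mul_one _
    calc ‖z‖ ≤ max ‖(p : ℤ_[p]) * (ξ ^ d - 1)‖ ‖(ξ ^ d - 1) ^ 2 * w‖ := by
          rw [heq]; exact PadicInt.nonarchimedean _ _
      _ ≤ (p:ℝ)⁻¹ * (p:ℝ)⁻¹ := max_le h1 h2
      _ < 1 * (p:ℝ)⁻¹ := by
          apply mul_lt_mul_of_pos_right _ hppos
          rw [inv_lt_one_iff₀]; right; exact_mod_cast hp1
      _ = (p:ℝ)⁻¹ := one_mul _
  refine ⟨‖z‖⁻¹, by positivity, ?_⟩
  intro n hn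
  have hC1 : (1:ℝ) ≤ ‖z‖⁻¹ := by
    rw [le_inv_comm₀ one_pos hzpos, inv_one]
    exact PadicInt.norm_le_one _
  have hnpos : (0:ℝ) < n := by exact_mod_cast hn
  by_cases hlt : ‖ξ ^ n - 1‖ < 1
  · obtain ⟨k, rfl⟩ := hdvd n hlt
    have hk1 : 1 ≤ k := by
      rcases Nat.eq_zero_or_pos k with rfl | h
      · simp at hn
      · exact h
    have hstep : ‖ξ ^ (p * (d * k)) - 1‖ ≤ ‖ξ ^ (d * k) - 1‖ := by
      have h4 : ξ ^ (p * (d * k)) = (1 + (ξ ^ (d * k) - 1)) ^ p := by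
        rw [mul_comm p (d * k), pow_mul]
        congr 1
        ring
      rw [h4]
      exact aux_pow_sub_one_le _ _
    have heq2 : ξ ^ (p * (d * k)) - 1 = (1 + z) ^ k - 1 := by
      have h5 : (1 : ℤ_[p]) + z = ξ ^ (p * d) := by rw [hzdef]; ring
      rw [h5, ← pow_mul, mul_assoc]
    have hmain : ‖ξ ^ (p * (d * k)) - 1‖ = ‖(k : ℤ_[p])‖ * ‖z‖ := by
      rw [heq2]; exact aux_main k z hzsmall
    have hknorm : (1:ℝ) / k ≤ ‖(k : ℤ_[p])‖ := aux_norm_nat_ge k hk1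
    have hkpos : (0:ℝ) < k := by exact_mod_cast hk1
    have hdr : (1:ℝ) ≤ d := by exact_mod_cast hd1
    have hle : (1:ℝ) / ((d:ℝ) * k) ≤ ‖(k : ℤ_[p])‖ := by
      refine le_trans ?_ hknorm
      apply one_div_le_one_div_of_le hkpos
      nlinarith
    calc (1:ℝ) / ((d * k : ℕ) : ℝ) = 1 / ((d:ℝ) * k) := by push_cast; ring
      _ ≤ ‖(k : ℤ_[p])‖ := hle
      _ = ‖z‖⁻¹ * (‖(k : ℤ_[p])‖ * ‖z‖) := by field_simp
      _ = ‖z‖⁻¹ * ‖ξ ^ (p * (d * k)) - 1‖ := by rw [hmain]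
      _ ≤ ‖z‖⁻¹ * ‖ξ ^ (d * k) - 1‖ := by gcongr
  · push_neg at hlt
    have h6 : ‖ξ ^ n - 1‖ = 1 := le_antisymm (PadicInt.norm_le_one _) hlt
    rw [h6, mul_one]
    calc (1:ℝ)/n ≤ 1 := by rw [div_le_one hnpos]; exact_mod_cast hn
      _ ≤ ‖z‖⁻¹ := hC1
end

section
/- For any integer square matrix A, prime p, and r ≥ 1, tr(A^{p^r}) ≡ tr(A^{p^{r−1}}) (mod p^r). -/
/-!
Write `tr (A ^ n)` as the sum, over closed walks `f : ZMod n → ι`, of the weights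
`w f = ∏ k, A (f k) (f (k + 1))`. Rotations of `ZMod n` act on walks and preserve weights. For
`n = p ^ (j + 1)` a walk fixed by a nonzero rotation is `p ^ j`-periodic, i.e. a walk of length
`p ^ j` run `p` times, whose weight is a `p`-th power; all other walks lie in free orbits of size
`p ^ (j + 1)`. Starting from Euler's congruence `c ^ p ^ (s + 1) ≡ c ^ p ^ s [ZMOD p ^ (s + 1)]`
and inducting on `j`, this gives `p ^ (j + s + 1) ∣ ∑ f, (w f ^ p ^ (s + 1) - w f ^ p ^ s)` over
walks of length `p ^ j`; one more splitting step yields the theorem.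
-/

open Finset

theorem AddMonoidHom.prod_comp_of_surjective {G H M : Type*} [AddGroup G] [AddGroup H]
    [Fintype G] [Fintype H] [CommMonoid M] (π : G →+ H) (hπ : Function.Surjective π)
    (h : H → M) : ∏ x, h (π x) = (∏ y, h y) ^ (Fintype.card G / Fintype.card H) := by
  classical
  have hfiber : ∀ y, #{x | π x = y} = #{x | π x = 0} := fun y =>
    AddMonoidHom.card_fiber_eq_of_mem_range π (hπ y) (hπ 0)
  have hcard : Fintype.card G = Fintype.card H * #{x | π x = 0} := by
    rw [← Finset.card_univ,
      Finset.card_eq_sum_card_fiberwise (f := π) (t := univ) fun _ _ => mem_univ _]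
    simp only [hfiber, sum_const, card_univ, smul_eq_mul]
  rw [Finset.prod_comp, Finset.image_univ_of_surjective hπ]
  simp only [hfiber, Finset.prod_pow, hcard]
  rw [Nat.mul_div_cancel_left _ Fintype.card_pos]

theorem AddAction.card_mul_dvd_sum_of_free {G X R : Type*} [AddGroup G] [Finite G]
    [AddAction G X] [CommSemiring R] {S : Finset X} (hS : ∀ g : G, ∀ x ∈ S, g +ᵥ x ∈ S)
    (hfree : ∀ x ∈ S, ∀ g : G, g +ᵥ x = x → g = 0) {φ : X → R}
    (hφ : ∀ (g : G) x, φ (g +ᵥ x) = φ x) {M : R} (hM : ∀ x ∈ S, M ∣ φ x) :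
    (Nat.card G : R) * M ∣ ∑ x ∈ S, φ x := by
  classical
  have := Fintype.ofFinite G
  let orbit : X → orbitRel.Quotient G X := Quotient.mk _
  rw [← Finset.sum_fiberwise_of_maps_to (g := orbit) fun x hx => mem_image_of_mem orbit hx]
  refine Finset.dvd_sum fun q hq => ?_
  obtain ⟨x, hx, rfl⟩ := Finset.mem_image.mp hq
  have hinj : Function.Injective fun g : G => g +ᵥ x := fun g h (hgh : g +ᵥ x = h +ᵥ x) => by
    have := hfree x hx (-h + g) (by rw [← vadd_vadd, hgh, vadd_vadd, neg_add_cancel, zero_vadd])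
    exact (neg_add_eq_zero.mp this).symm
  have hfiber : {y ∈ S | orbit y = orbit x} = univ.image fun g : G => g +ᵥ x := by
    ext y
    simp only [mem_filter, mem_image, mem_univ, true_and, orbit, Quotient.eq, orbitRel_apply,
      mem_orbit_iff]
    constructor
    · exact fun h => h.2
    · rintro ⟨g, rfl⟩
      exact ⟨hS g x hx, g, rfl⟩
  rw [hfiber, sum_image hinj.injOn]
  simp only [hφ, sum_const, card_univ, nsmul_eq_mul, Nat.card_eq_fintype_card]
  exact mul_dvd_mul_left _ (hM x hx)

theorem Int.prime_pow_succ_dvd_pow_sub_pow {p : ℕ} (hp : p.Prime) (c : ℤ) (s : ℕ) :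
    (p : ℤ) ^ (s + 1) ∣ c ^ p ^ (s + 1) - c ^ p ^ s := by
  simpa [← pow_mul, ← pow_succ'] using
    dvd_sub_pow_of_dvd_sub (Int.ModEq.pow_prime_eq_self hp c).symm.dvd s

namespace ZMod

theorem exists_natCast_mul_eq_prime_pow {p j : ℕ} (hp : p.Prime) {a : ZMod (p ^ (j + 1))}
    (ha : a ≠ 0) : ∃ k : ℕ, (k : ZMod (p ^ (j + 1))) * a = (p : ZMod (p ^ (j + 1))) ^ j := by
  have : NeZero (p ^ (j + 1)) := ⟨pow_ne_zero _ hp.ne_zero⟩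
  obtain ⟨e, u, hpu, hau⟩ :=
    Nat.exists_eq_pow_mul_and_not_dvd ((val_ne_zero a).mpr ha) p hp.ne_one
  have hej : e ≤ j := by
    have hu : u ≠ 0 := by rintro rfl; exact hpu (dvd_zero p)
    have : p ^ e < p ^ (j + 1) :=
      (Nat.le_mul_of_pos_right _ (Nat.pos_of_ne_zero hu)).trans_lt (hau ▸ val_lt a)
    exact Nat.lt_succ_iff.mp ((Nat.pow_lt_pow_iff_right hp.one_lt).mp this)
  have hunit : (u : ZMod (p ^ (j + 1))) * (u : ZMod (p ^ (j + 1)))⁻¹ = 1 :=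
    coe_mul_inv_eq_one u (Nat.Coprime.pow_right _ (Nat.coprime_comm.mp
      (hp.coprime_iff_not_dvd.mpr hpu)))
  refine ⟨p ^ (j - e) * ((u : ZMod (p ^ (j + 1)))⁻¹).val, ?_⟩
  rw [← natCast_zmod_val a, hau]
  push_cast
  rw [natCast_zmod_val, ← pow_sub_mul_pow (p : ZMod (p ^ (j + 1))) hej]
  linear_combination (↑p ^ (j - e) * ↑p ^ e : ZMod (p ^ (j + 1))) * hunit

theorem periodic_iff_exists_comp_castHom {α : Type*} {n q : ℕ} [NeZero n] (hqn : q ∣ n)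
    (f : ZMod n → α) :
    Function.Periodic f (q : ZMod n) ↔ ∃ g : ZMod q → α, g ∘ castHom hqn (ZMod q) = f := by
  constructor
  · intro hf
    refine ⟨fun y => f (y.val : ZMod n), funext fun x => ?_⟩
    have hval : (castHom hqn (ZMod q) x).val = x.val % q := by
      rw [castHom_apply, cast_eq_val, val_natCast]
    conv_rhs => rw [← natCast_zmod_val x, ← Nat.mod_add_div' x.val q]
    simp only [Function.comp_apply, hval, Nat.cast_add, Nat.cast_mul, hf.nat_mul _ _]
  · rintro ⟨g, rfl⟩ x
    simp only [Function.comp_apply, map_add, map_natCast, natCast_self, add_zero]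

open Classical in
theorem sum_filter_periodic_eq_sum_comp_castHom {α β : Type*} [Fintype α] [DecidableEq α]
    [AddCommMonoid β] {n q : ℕ} [NeZero n] [NeZero q] (hqn : q ∣ n) (φ : (ZMod n → α) → β) :
    ∑ f with Function.Periodic f (q : ZMod n), φ f =
      ∑ g : ZMod q → α, φ (g ∘ castHom hqn (ZMod q)) := by
  have hinj : Function.Injective fun g : ZMod q → α => g ∘ castHom hqn (ZMod q) :=
    (ringHom_surjective _).injective_comp_right
  rw [← Finset.sum_image hinj.injOn]
  congr 1
  ext f
  simp only [mem_filter, mem_univ, true_and, mem_image, periodic_iff_exists_comp_castHom hqn]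

theorem periodic_prime_pow_of_vadd_eq_self {α : Type*} {p j : ℕ} [Fact p.Prime]
    {f : ZMod (p ^ (j + 1)) → α} {c : (ZMod (p ^ (j + 1)))ᵈᵃᵃ} (hc : c ≠ 0) (hf : c +ᵥ f = f) :
    Function.Periodic f ((p ^ j : ℕ) : ZMod (p ^ (j + 1))) := by
  have hper : Function.Periodic f (DomAddAct.mk.symm c) := fun x => by
    rw [add_comm]; exact congrFun hf x
  obtain ⟨k, hk⟩ := exists_natCast_mul_eq_prime_pow Fact.out
    (DomAddAct.mk.symm.injective.ne hc : DomAddAct.mk.symm c ≠ 0)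
  simpa [hk] using hper.nat_mul k

theorem prime_pow_mul_dvd_sum_sub_sum_comp_castHom {α R : Type*} [Fintype α] [DecidableEq α]
    [CommRing R] {p j : ℕ} [Fact p.Prime] {φ : (ZMod (p ^ (j + 1)) → α) → R}
    (hφ : ∀ (c : (ZMod (p ^ (j + 1)))ᵈᵃᵃ) f, φ (c +ᵥ f) = φ f) {M : R} (hM : ∀ f, M ∣ φ f) :
    (p : R) ^ (j + 1) * M ∣ ∑ f, φ f -
      ∑ g : ZMod (p ^ j) → α, φ (g ∘ castHom (pow_dvd_pow p j.le_succ) (ZMod (p ^ j))) := by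
  classical
  set c : ZMod (p ^ (j + 1)) := ((p ^ j : ℕ) : ZMod (p ^ (j + 1)))
  rw [← sum_filter_add_sum_filter_not univ (Function.Periodic · c),
    sum_filter_periodic_eq_sum_comp_castHom (pow_dvd_pow p j.le_succ), add_sub_cancel_left]
  set S : Finset (ZMod (p ^ (j + 1)) → α) := {f | ¬Function.Periodic f c}
  have hS : ∀ d : (ZMod (p ^ (j + 1)))ᵈᵃᵃ, ∀ f ∈ S, d +ᵥ f ∈ S := by
    simp only [S, mem_filter, mem_univ, true_and]
    intro d f hf hdf
    refine hf fun x => ?_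
    simpa [DomAddAct.vadd_apply, add_assoc] using hdf (-DomAddAct.mk.symm d + x)
  have hfree : ∀ f ∈ S, ∀ d : (ZMod (p ^ (j + 1)))ᵈᵃᵃ, d +ᵥ f = f → d = 0 := by
    simp only [S, mem_filter, mem_univ, true_and]
    intro f hf d hdf
    by_contra hd
    exact hf (periodic_prime_pow_of_vadd_eq_self hd hdf)
  have hcard : Nat.card (ZMod (p ^ (j + 1)))ᵈᵃᵃ = p ^ (j + 1) := by
    rw [Nat.card_congr DomAddAct.mk.symm, Nat.card_zmod]
  have : Finite (ZMod (p ^ (j + 1)))ᵈᵃᵃ := Finite.of_equiv _ DomAddAct.mk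
  have := AddAction.card_mul_dvd_sum_of_free hS hfree hφ fun f _ => hM f
  rwa [hcard, Nat.cast_pow] at this

end ZMod

namespace Matrix

variable {ι R : Type*} [CommSemiring R]

theorem pow_succ_apply_eq_sum [Fintype ι] [DecidableEq ι] (A : Matrix ι ι R) (n : ℕ) (i j : ι) :
    (A ^ (n + 1)) i j =
      ∑ v : Fin n → ι, ∏ k : Fin (n + 1),
        A ((Fin.cons i v : Fin (n + 1) → ι) k) ((Fin.snoc v j : Fin (n + 1) → ι) k) := by
  induction n generalizing j with
  | zero => simp [Fin.snoc]
  | succ n ih =>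
    rw [pow_succ, mul_apply, ← Equiv.sum_comp (Fin.snocEquiv fun _ : Fin (n + 1) => ι),
      Fintype.sum_prod_type]
    refine Finset.sum_congr rfl fun l _ => ?_
    rw [ih, Finset.sum_mul]
    refine Finset.sum_congr rfl fun v _ => ?_
    simp only [Fin.snocEquiv, Equiv.coe_fn_mk, Fin.prod_univ_castSucc, Fin.cons_snoc_eq_snoc_cons,
      Fin.snoc_castSucc, Fin.snoc_last]

def cycleWeight (A : Matrix ι ι R) {n : ℕ} [NeZero n] (f : ZMod n → ι) : R :=
  ∏ k, A (f k) (f (k + 1))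

theorem trace_pow_eq_sum_cycleWeight [Fintype ι] [DecidableEq ι] (A : Matrix ι ι R) (n : ℕ)
    [NeZero n] : (A ^ n).trace = ∑ f : ZMod n → ι, A.cycleWeight f := by
  obtain ⟨n, rfl⟩ := Nat.exists_eq_succ_of_ne_zero (NeZero.ne n)
  change ∑ i, (A ^ (n + 1)) i i = ∑ f : Fin (n + 1) → ι, ∏ k, A (f k) (f (k + 1))
  rw [← Equiv.sum_comp (Fin.consEquiv fun _ : Fin (n + 1) => ι), Fintype.sum_prod_type]
  simp only [pow_succ_apply_eq_sum, Fin.consEquiv, Equiv.coe_fn_mk, Fin.snoc_eq_cons_rotate,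
    finRotate_apply]

theorem cycleWeight_vadd (A : Matrix ι ι R) {n : ℕ} [NeZero n] (c : (ZMod n)ᵈᵃᵃ)
    (f : ZMod n → ι) : A.cycleWeight (c +ᵥ f) = A.cycleWeight f := by
  simp only [cycleWeight, DomAddAct.vadd_apply, vadd_eq_add, ← add_assoc]
  exact Fintype.prod_equiv (Equiv.addLeft (DomAddAct.mk.symm c)) _ _ fun _ => rfl

theorem cycleWeight_comp_castHom (A : Matrix ι ι R) {n q : ℕ} [NeZero n] [NeZero q]
    (hqn : q ∣ n) (g : ZMod q → ι) :
    A.cycleWeight (g ∘ ZMod.castHom hqn (ZMod q)) = A.cycleWeight g ^ (n / q) := by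
  have := (ZMod.castHom hqn (ZMod q)).toAddMonoidHom.prod_comp_of_surjective
    (ZMod.ringHom_surjective _) fun y => A (g y) (g (y + 1))
  rw [ZMod.card, ZMod.card] at this
  simp only [cycleWeight, Function.comp_apply, map_add, map_one]
  exact this

variable [Fintype ι] [DecidableEq ι] {p : ℕ} [Fact p.Prime]

theorem prime_pow_dvd_sum_cycleWeight_pow_sub (A : Matrix ι ι ℤ) (j s : ℕ) :
    (p : ℤ) ^ (j + s + 1) ∣
      ∑ f : ZMod (p ^ j) → ι, (A.cycleWeight f ^ p ^ (s + 1) - A.cycleWeight f ^ p ^ s) := by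
  induction j generalizing s with
  | zero =>
    rw [zero_add]
    exact dvd_sum fun f _ => Int.prime_pow_succ_dvd_pow_sub_pow Fact.out _ s
  | succ j ih =>
    have hlift (g : ZMod (p ^ j) → ι) (t : ℕ) :
        A.cycleWeight (g ∘ ZMod.castHom (pow_dvd_pow p j.le_succ) (ZMod (p ^ j))) ^ p ^ t =
          A.cycleWeight g ^ p ^ (t + 1) := by
      rw [cycleWeight_comp_castHom, pow_succ, Nat.mul_div_cancel_left _ (NeZero.pos _), ← pow_mul,
        pow_succ']
    have hsplit := ZMod.prime_pow_mul_dvd_sum_sub_sum_comp_castHom (p := p) (j := j)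
      (φ := fun f => A.cycleWeight f ^ p ^ (s + 1) - A.cycleWeight f ^ p ^ s)
      (fun c f => by simp only [cycleWeight_vadd])
      (fun f => Int.prime_pow_succ_dvd_pow_sub_pow Fact.out _ s)
    simp only [hlift] at hsplit
    have hrec := ih (s + 1)
    rw [show j + (s + 1) + 1 = j + 1 + (s + 1) by ring, pow_add] at hrec
    rw [show j + 1 + s + 1 = j + 1 + (s + 1) by ring, pow_add]
    simpa only [sub_add_cancel] using dvd_add hsplit hrec

theorem prime_pow_dvd_trace_pow_sub (A : Matrix ι ι ℤ) (k : ℕ) :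
    (p : ℤ) ^ (k + 1) ∣ (A ^ p ^ (k + 1)).trace - (A ^ p ^ k).trace := by
  rw [trace_pow_eq_sum_cycleWeight, trace_pow_eq_sum_cycleWeight]
  have hsplit := ZMod.prime_pow_mul_dvd_sum_sub_sum_comp_castHom (p := p) (j := k)
    (φ := A.cycleWeight) (cycleWeight_vadd A) (fun _ => one_dvd _)
  simp only [cycleWeight_comp_castHom, pow_succ, Nat.mul_div_cancel_left _ (NeZero.pos _),
    mul_one] at hsplit
  have hdiag := prime_pow_dvd_sum_cycleWeight_pow_sub (p := p) A k 0
  simp only [add_zero, zero_add, pow_one, pow_zero, sum_sub_distrib] at hdiag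
  simpa only [← pow_succ, sub_add_sub_cancel] using dvd_add hsplit hdiag

end Matrix

theorem euler_congruence_trace (m : ℕ) (A : Matrix (Fin m) (Fin m) ℤ)
    (p : ℕ) (hp : p.Prime) (r : ℕ) (hr : 1 ≤ r) :
    (A ^ (p ^ r)).trace ≡ (A ^ (p ^ (r - 1))).trace [ZMOD (p ^ r)] := by
  have : Fact p.Prime := ⟨hp⟩
  obtain ⟨k, rfl⟩ := Nat.exists_eq_add_of_le' hr
  exact (Int.modEq_iff_dvd.mpr (A.prime_pow_dvd_trace_pow_sub k)).symm
end

section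
/- Suppose a sequence of real numbers satisfies R_n = g(n)·f(n) where g(n) = Σ_{j∈J} c_j w_j^n for a finite index set J with c_j = ±1, nonzero complex numbers w_j having a unique index m with |w_m| > |w_j| for all j ≠ m, and f satisfies 1/n ≤ C·f(n) ≤ C for a constant C > 0 and lim_{n→∞} f(n)^{1/n} = 1, and R_n > 0 for all n. Then lim_{n→∞} R_n^{1/n} exists and equals |w_m|. -/
/-!
The dominant term `c m * w m ^ n` swamps the others, so `‖∑ j, c j * w j ^ n‖` eventually lies
between two positive multiples of `‖w m‖ ^ n`. Since `a ^ (1 / n) → 1` for every `a > 0`, the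
`n`-th root of the exponential sum tends to `‖w m‖`, and `R n ^ (1 / n)` is that root times
`f n ^ (1 / n) → 1`.
-/

open Filter Topology Asymptotics

lemma tendsto_const_rpow_one_div_natCast {a : ℝ} (ha : 0 < a) :
    Tendsto (fun n : ℕ => a ^ ((1 : ℝ) / n)) atTop (𝓝 1) := by
  simpa [Function.comp_def] using ((Real.continuousAt_const_rpow ha.ne').tendsto).comp
    (tendsto_one_div_atTop_nhds_zero_nat (𝕜 := ℝ))

lemma tendsto_rpow_one_div_natCast_of_le_of_le {u : ℕ → ℝ} {a b M : ℝ} (ha : 0 < a) (hb : 0 < b)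
    (hM : 0 ≤ M) (hlo : ∀ᶠ n in atTop, a * M ^ n ≤ u n) (hhi : ∀ᶠ n in atTop, u n ≤ b * M ^ n) :
    Tendsto (fun n : ℕ => u n ^ ((1 : ℝ) / n)) atTop (𝓝 M) := by
  have rpow_mul_pow : ∀ {k : ℝ}, 0 < k → ∀ n : ℕ, n ≠ 0 →
      (k * M ^ n) ^ ((1 : ℝ) / n) = k ^ ((1 : ℝ) / n) * M := fun hk n hn => by
    rw [Real.mul_rpow hk.le (by positivity), one_div, Real.pow_rpow_inv_natCast hM hn]
  have lim : ∀ {k : ℝ}, 0 < k → Tendsto (fun n : ℕ => k ^ ((1 : ℝ) / n) * M) atTop (𝓝 M) :=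
    fun hk => by simpa using (tendsto_const_rpow_one_div_natCast hk).mul_const M
  refine tendsto_of_tendsto_of_tendsto_of_le_of_le' (lim ha) (lim hb) ?_ ?_
  · filter_upwards [hlo, eventually_ne_atTop 0] with n hn hn0
    rw [← rpow_mul_pow ha n hn0]
    exact Real.rpow_le_rpow (by positivity) hn (by positivity)
  · filter_upwards [hlo, hhi, eventually_ne_atTop 0] with n hn hn' hn0
    rw [← rpow_mul_pow hb n hn0]
    exact Real.rpow_le_rpow ((by positivity : 0 ≤ a * M ^ n).trans hn) hn' (by positivity)

section ExponentialSum

variable {J : Type*} [Fintype J] (c : J → ℂ) {w : J → ℂ}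

lemma norm_sum_mul_pow_le {M : ℝ} (hM : ∀ j, ‖w j‖ ≤ M) (n : ℕ) :
    ‖∑ j, c j * w j ^ n‖ ≤ (∑ j, ‖c j‖) * M ^ n := by
  rw [Finset.sum_mul]
  refine (norm_sum_le _ _).trans (Finset.sum_le_sum fun j _ => ?_)
  rw [norm_mul, norm_pow]
  gcongr
  exact hM j

variable {m : J}

lemma isLittleO_sum_mul_pow_sub_dominant (hm : ∀ j, j ≠ m → ‖w j‖ < ‖w m‖) :
    (fun n : ℕ => ∑ j, c j * w j ^ n - c m * w m ^ n) =o[atTop] fun n => w m ^ n := by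
  classical
  simp_rw [← Finset.sum_erase_eq_sub (Finset.mem_univ m)]
  refine IsLittleO.fun_sum fun j hj => IsLittleO.const_mul_left ?_ (c j)
  rw [← isLittleO_norm_norm]
  simpa only [norm_pow] using
    isLittleO_pow_pow_of_lt_left (norm_nonneg _) (hm j (Finset.ne_of_mem_erase hj))

lemma eventually_le_norm_sum_mul_pow (hcm : c m ≠ 0) (hm : ∀ j, j ≠ m → ‖w j‖ < ‖w m‖) :
    ∀ᶠ n : ℕ in atTop, ‖c m‖ / 2 * ‖w m‖ ^ n ≤ ‖∑ j, c j * w j ^ n‖ := by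
  filter_upwards [(isLittleO_sum_mul_pow_sub_dominant c hm).def
    (half_pos (norm_pos_iff.mpr hcm))] with n hn
  have htri := norm_sub_norm_le (c m * w m ^ n) (c m * w m ^ n - ∑ j, c j * w j ^ n)
  rw [sub_sub_cancel, norm_sub_rev, norm_mul, norm_pow] at htri
  rw [norm_pow] at hn
  linarith

lemma tendsto_norm_sum_mul_pow_rpow (hcm : c m ≠ 0) (hm : ∀ j, j ≠ m → ‖w j‖ < ‖w m‖) :
    Tendsto (fun n : ℕ => ‖∑ j, c j * w j ^ n‖ ^ ((1 : ℝ) / n)) atTop (𝓝 ‖w m‖) := by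
  have hcm' : 0 < ‖c m‖ := norm_pos_iff.mpr hcm
  refine tendsto_rpow_one_div_natCast_of_le_of_le (by positivity)
    (hcm'.trans_le (Finset.single_le_sum (fun j _ => norm_nonneg (c j)) (Finset.mem_univ m)))
    (norm_nonneg _) (eventually_le_norm_sum_mul_pow c hcm hm) (Eventually.of_forall ?_)
  refine norm_sum_mul_pow_le c fun j => ?_
  rcases eq_or_ne j m with rfl | hj
  exacts [le_rfl, (hm j hj).le]

end ExponentialSum

theorem growth_rate_dominant_term_general (J : Type*) [Fintype J]
    (c : J → ℂ) (hc : ∀ j, c j = 1 ∨ c j = -1)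
    (w : J → ℂ) (m : J)
    (hm : ∀ j, j ≠ m → ‖w j‖ < ‖w m‖)
    (f : ℕ → ℝ) (C : ℝ) (hC : 0 < C)
    (hf : ∀ n : ℕ, 1 ≤ n → (1 : ℝ) / n ≤ C * f n ∧ C * f n ≤ C)
    (hflim : Filter.Tendsto (fun n : ℕ => f n ^ ((1 : ℝ) / n)) Filter.atTop (nhds 1))
    (R : ℕ → ℝ) (hRpos : ∀ n : ℕ, 1 ≤ n → 0 < R n)
    (hR : ∀ n : ℕ, 1 ≤ n → (R n : ℂ) = (∑ j, c j * w j ^ n) * (f n : ℂ)) :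
    Filter.Tendsto (fun n : ℕ => R n ^ ((1 : ℝ) / n)) Filter.atTop (nhds ‖w m‖) := by
  have hcm : c m ≠ 0 := by rcases hc m with h | h <;> simp [h]
  have hf_pos : ∀ n : ℕ, 1 ≤ n → 0 < f n := fun n hn =>
    pos_of_mul_pos_right ((by positivity : (0 : ℝ) < 1 / n).trans_le (hf n hn).1) hC.le
  have hR_eq : ∀ n : ℕ, 1 ≤ n → R n = ‖∑ j, c j * w j ^ n‖ * f n := fun n hn => by
    simpa [abs_of_pos (hRpos n hn), abs_of_pos (hf_pos n hn)] using congrArg norm (hR n hn)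
  have hlim := (tendsto_norm_sum_mul_pow_rpow c hcm hm).mul hflim
  rw [mul_one] at hlim
  refine hlim.congr' ?_
  filter_upwards [eventually_ge_atTop 1] with n hn
  rw [hR_eq n hn, Real.mul_rpow (norm_nonneg _) (hf_pos n hn).le]

theorem growth_rate_dominant_term (J : Type*) [Fintype J]
    (c : J → ℂ) (hc : ∀ j, c j = 1 ∨ c j = -1)
    (w : J → ℂ) (hw : ∀ j, w j ≠ 0) (m : J)
    (hm : ∀ j, j ≠ m → ‖w j‖ < ‖w m‖)
    (f : ℕ → ℝ) (C : ℝ) (hC : 0 < C)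
    (hf : ∀ n : ℕ, 1 ≤ n → (1 : ℝ) / n ≤ C * f n ∧ C * f n ≤ C)
    (hflim : Filter.Tendsto (fun n : ℕ => f n ^ ((1 : ℝ) / n)) Filter.atTop (nhds 1))
    (R : ℕ → ℝ) (hRpos : ∀ n : ℕ, 1 ≤ n → 0 < R n)
    (hR : ∀ n : ℕ, 1 ≤ n → (R n : ℂ) = (∑ j, c j * w j ^ n) * (f n : ℂ)) :
    Filter.Tendsto (fun n : ℕ => R n ^ ((1 : ℝ) / n)) Filter.atTop (nhds ‖w m‖) :=
  growth_rate_dominant_term_general J c hc w m hm f C hC hf hflim R hRpos hR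
end
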